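/- In a pre-abelian category with enough quasi-projectives (for every object A there is a cokernel P → A with P quasi-projective), cokernels are stable under pullback, i.e., the category is left quasi-abelian. -/
import Mathlib


open CategoryTheory CategoryTheory.Limits

universe v u

variable {C : Type u} [Category.{v} C]

/-- A morphism is a *cokernel* if it arises as the cokernel of some morphism. -/
def IsCokernelMorphism [HasZeroMorphisms C] {X Y : C} (f : X ⟶ Y) : Prop :=
  ∃ (W : C) (g : W ⟶ X) (w : g ≫ f = 0), Nonempty (IsColimit (CokernelCofork.ofπ f w))

/-- An object `P` is quasi-projective if every cokernel morphism `f : X ⟶ Y` induces a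
surjection `Hom(P, X) → Hom(P, Y)`. -/
def QuasiProjective [HasZeroMorphisms C] (P : C) : Prop :=
  ∀ ⦃X Y : C⦄ (f : X ⟶ Y), IsCokernelMorphism f → ∀ h : P ⟶ Y, ∃ k : P ⟶ X, k ≫ f = h

lemma IsCokernelMorphism.epi [HasZeroMorphisms C] {X Y : C} {f : X ⟶ Y}
    (h : IsCokernelMorphism f) : Epi f := by
  obtain ⟨W, g, w, ⟨hc⟩⟩ := h
  exact epi_of_isColimit_cofork hc

lemma IsCokernelMorphism.desc [HasZeroMorphisms C] [HasKernels C] {X Y : C} {f : X ⟶ Y}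
    (h : IsCokernelMorphism f) {T : C} (t : X ⟶ T) (ht : kernel.ι f ≫ t = 0) :
    ∃ s : Y ⟶ T, f ≫ s = t := by
  obtain ⟨W, g, w, ⟨hc⟩⟩ := h
  have hg : g ≫ t = 0 := by
    have : g = kernel.lift f g w ≫ kernel.ι f := by simp
    rw [this, Category.assoc, ht, comp_zero]
  obtain ⟨l, hl⟩ := CokernelCofork.IsColimit.desc' hc t hg
  exact ⟨l, hl⟩

/-- A pre-abelian category with enough quasi-projectives is left quasi-abelian:
cokernels are stable under pullback. -/
theorem stmt16 [Preadditive C] [HasFiniteBiproducts C] [HasKernels C] [HasCokernels C]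
    (hEnough : ∀ A : C, ∃ (P : C) (p : P ⟶ A), IsCokernelMorphism p ∧ QuasiProjective P) :
    ∀ ⦃W X Y Z : C⦄ (a : W ⟶ X) (b : W ⟶ Y) (c : X ⟶ Z) (d : Y ⟶ Z),
      IsPullback a b c d → IsCokernelMorphism d → IsCokernelMorphism a := by
  intro W X Y Z a b c d hPB hd
  -- the canonical map from the kernel of d to the pullback
  have hj0 : (0 : kernel d ⟶ X) ≫ c = kernel.ι d ≫ d := by simp
  set j : kernel d ⟶ W := hPB.lift 0 (kernel.ι d) hj0 with hjdef
  have hja : j ≫ a = 0 := hPB.lift_fst _ _ _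
  have hjb : j ≫ b = kernel.ι d := hPB.lift_snd _ _ _
  -- choose a quasi-projective cover of X
  obtain ⟨P, p, hp, hP⟩ := hEnough X
  -- lift p ≫ c along d
  obtain ⟨q, hq⟩ := hP d hd (p ≫ c)
  have hcomm : p ≫ c = q ≫ d := hq.symm
  set e : P ⟶ W := hPB.lift p q hcomm with hedef
  have hea : e ≫ a = p := hPB.lift_fst _ _ _
  have heb : e ≫ b = q := hPB.lift_snd _ _ _
  have hpepi : Epi p := hp.epi
  have haepi : Epi a := by
    constructor
    intro T u v huv
    have : p ≫ u = p ≫ v := by rw [← hea, Category.assoc, Category.assoc, huv]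
    exact (cancel_epi p).mp this
  -- choose a quasi-projective cover of W
  obtain ⟨R, r, hr, hR⟩ := hEnough W
  have hrepi : Epi r := hr.epi
  obtain ⟨α, hα⟩ := hR p hp (r ≫ a)
  -- r ≫ b - α ≫ q kills d
  have hβd : (r ≫ b - α ≫ q) ≫ d = 0 := by
    rw [Preadditive.sub_comp, Category.assoc, Category.assoc, hq, ← hPB.w,
      ← Category.assoc, ← Category.assoc, hα, Category.assoc, sub_self]
  set γ : R ⟶ kernel d := kernel.lift d (r ≫ b - α ≫ q) hβd with hγdef
  have hγ : γ ≫ kernel.ι d = r ≫ b - α ≫ q := kernel.lift_ι _ _ _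
  -- joint surjectivity decomposition of r
  have hrdecomp : r = α ≫ e + γ ≫ j := by
    apply hPB.hom_ext
    · rw [Preadditive.add_comp, Category.assoc, Category.assoc, hea, hja, comp_zero, add_zero, hα]
    · rw [Preadditive.add_comp, Category.assoc, Category.assoc, heb, hjb, hγ]
      abel
  -- k' ≫ e factors through j
  have hnd : (kernel.ι p ≫ e ≫ b) ≫ d = 0 := by
    rw [Category.assoc, Category.assoc, ← hPB.w, ← Category.assoc e a, hea,
      ← Category.assoc, kernel.condition, zero_comp]
  set n : kernel p ⟶ kernel d := kernel.lift d (kernel.ι p ≫ e ≫ b) hnd with hndef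
  have hn : n ≫ kernel.ι d = kernel.ι p ≫ e ≫ b := kernel.lift_ι _ _ _
  have hke : kernel.ι p ≫ e = n ≫ j := by
    apply hPB.hom_ext
    · rw [Category.assoc, Category.assoc, hea, hja, comp_zero, kernel.condition]
    · rw [Category.assoc, Category.assoc, hjb, hn]
  -- the universal property
  have key : ∀ {T : C} (t : W ⟶ T), j ≫ t = 0 → ∃ s : X ⟶ T, a ≫ s = t := by
    intro T t ht
    have het : kernel.ι p ≫ (e ≫ t) = 0 := by
      rw [← Category.assoc, hke, Category.assoc, ht, comp_zero]
    obtain ⟨s, hs⟩ := hp.desc (e ≫ t) het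
    refine ⟨s, ?_⟩
    have hru : r ≫ (t - a ≫ s) = 0 := by
      rw [hrdecomp, Preadditive.add_comp, Preadditive.comp_sub, Preadditive.comp_sub]
      rw [Category.assoc, Category.assoc, Category.assoc, Category.assoc, ht, comp_zero,
        ← Category.assoc e a, hea, hs]
      rw [← Category.assoc j a s, hja, zero_comp, comp_zero]
      abel
    have := (cancel_epi r).mp (by rw [hru, comp_zero] : r ≫ (t - a ≫ s) = r ≫ 0)
    have := sub_eq_zero.mp this
    exact this.symm
  refine ⟨kernel d, j, hja, ⟨?_⟩⟩
  exact CokernelCofork.IsColimit.ofπ a hja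
    (fun {T} t ht => (key t ht).choose)
    (fun {T} t ht => (key t ht).choose_spec)
    (fun {T} t ht m hm => by
      have := (key t ht).choose_spec
      rw [← cancel_epi a, hm, this])
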